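/- arXiv:2112.01106 — 2 statements merged into one kernel-verified Lean document; each statement's English description precedes it below -/
import Mathlib

section
/- Let b > 1 and n > 1 be integers and a a positive integer with gcd(r_b(n), a) = 1. Then S_a(b,n) is homogeneous: for every ω in the Apéry set Ap(S_a(b,n), a_1), any two representations ω = ∑_{j=1}^n u_j·a_j = ∑_{j=1}^n v_j·a_j with u_j, v_j ∈ ℕ satisfy ∑_{j=1}^n u_j = ∑_{j=1}^n v_j. -/
/-- The repunit number in base `b` of length `ℓ`: `r_b(ℓ) = ∑_{j=0}^{ℓ-1} b^j`. -/
def repunit (b ℓ : ℕ) : ℕ := ∑ j ∈ Finset.range ℓ, b ^ j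

/-- The sequence `a_i = r_b(n) + a·r_b(i-1)`. -/
def aseq (b a n i : ℕ) : ℕ := repunit b n + a * repunit b (i - 1)

/-- The additive submonoid `S_a(b,n)` of `ℕ` generated by `{a_i : i ≥ 1}`. -/
def grep (b a n : ℕ) : AddSubmonoid ℕ :=
  AddSubmonoid.closure {x | ∃ i, 1 ≤ i ∧ x = aseq b a n i}

/-- The Apéry set of `S` with respect to `s`: elements `ω ∈ S` with `ω - s ∉ S`
(i.e. there is no `t ∈ S` with `ω = t + s`). -/
def Apery (S : AddSubmonoid ℕ) (s : ℕ) : Set ℕ :=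
  {ω | ω ∈ S ∧ ¬ ∃ t ∈ S, ω = t + s}

lemma repunit_succ' (b j : ℕ) : repunit b (j + 1) = repunit b j + b ^ j := by
  rw [repunit, Finset.sum_range_succ, ← repunit]

lemma repunit_one (b : ℕ) : repunit b 1 = 1 := by simp [repunit]

lemma repunit_succ (b j : ℕ) : repunit b (j + 1) = b * repunit b j + 1 := by
  rw [repunit, geom_sum_succ, ← repunit]

lemma repunit_mono (b : ℕ) {j k : ℕ} (h : j ≤ k) : repunit b j ≤ repunit b k :=
  Finset.sum_le_sum_of_subset (Finset.range_subset_range.mpr h)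

lemma repunit_pos (b : ℕ) {j : ℕ} (h : 1 ≤ j) : 1 ≤ repunit b j := by
  have := repunit_mono b h
  rwa [repunit_one] at this

/-- `T` is a sum of at most `m` repunits (base `b`) with indices in `[1, q)`. -/
def RepLt (b q m T : ℕ) : Prop :=
  ∃ l : Multiset ℕ, (∀ j ∈ l, 1 ≤ j ∧ j < q) ∧ Multiset.card l ≤ m ∧
    T = (l.map (repunit b)).sum

lemma RepLt.mono {b q m T : ℕ} (h : RepLt b q m T) {q' m' : ℕ} (hq : q ≤ q') (hm : m ≤ m') :
    RepLt b q' m' T := by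
  obtain ⟨l, h1, h2, h3⟩ := h
  exact ⟨l, fun j hj => ⟨(h1 j hj).1, lt_of_lt_of_le (h1 j hj).2 hq⟩, le_trans h2 hm, h3⟩

/-- Subtracting 1 from a repunit sum costs at most `b - 1` extra terms. -/
lemma RepLt.sub_one {b q m T : ℕ} (h : RepLt b q m T) (hT : 1 ≤ T) :
    RepLt b q (m - 1 + b) (T - 1) := by
  obtain ⟨l, hmem, hcard, hsum⟩ := h
  have hl0 : l ≠ 0 := by
    rintro rfl
    simp at hsum; omega
  obtain ⟨t, ht⟩ := Multiset.exists_mem_of_ne_zero hl0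
  have htq := hmem t ht
  have hl : t ::ₘ l.erase t = l := Multiset.cons_erase ht
  have hsum' : T = repunit b t + ((l.erase t).map (repunit b)).sum := by
    rw [← hl] at hsum; simpa using hsum
  have hcard' : Multiset.card (l.erase t) = Multiset.card l - 1 := by
    rw [← hl]; simp
  have hmem' : ∀ j ∈ l.erase t, 1 ≤ j ∧ j < q := fun j hj =>
    hmem j (Multiset.mem_of_mem_erase hj)
  rcases Nat.lt_or_ge t 2 with ht2 | ht2
  · -- t = 1
    have ht1 : t = 1 := by omega
    subst ht1
    refine ⟨l.erase 1, hmem', by omega, ?_⟩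
    rw [repunit_one] at hsum'
    omega
  · -- t ≥ 2 : replace it by b copies of t - 1
    obtain ⟨t', rfl⟩ : ∃ t', t = t' + 1 := ⟨t - 1, by omega⟩
    refine ⟨Multiset.replicate b t' + l.erase (t' + 1), ?_, ?_, ?_⟩
    · intro j hj
      rcases Multiset.mem_add.mp hj with hj | hj
      · have := Multiset.eq_of_mem_replicate hj
        subst this
        exact ⟨by omega, by omega⟩
      · exact hmem' j hj
    · simp [hcard']; omega
    · have hrs : repunit b (t' + 1) = b * repunit b t' + 1 := repunit_succ b t'
      simp only [Multiset.map_add, Multiset.sum_add, Multiset.map_replicate,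
        Multiset.sum_replicate, smul_eq_mul]
      omega

/-- Key lemma: subtracting `repunit b q` from a sum of `m` repunits with indices `< q`
(which exceeds it) can be done with at most `m - 1` repunits with indices `< q`. -/
lemma key (b : ℕ) (hb : 1 < b) :
    ∀ q, 2 ≤ q → ∀ m T, RepLt b q m T → repunit b q ≤ T →
      RepLt b q (m - 1) (T - repunit b q) := by
  intro q hq
  induction q, hq using Nat.le_induction with
  | base =>
    intro m T h hT
    obtain ⟨l, hmem, hcard, hsum⟩ := h
    have hrep : l.map (repunit b) = Multiset.replicate (Multiset.card l) 1 := by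
      rw [Multiset.eq_replicate]
      constructor
      · simp
      · intro x hx
        obtain ⟨j, hj, rfl⟩ := Multiset.mem_map.mp hx
        have := hmem j hj
        have hj1 : j = 1 := by omega
        rw [hj1, repunit_one]
    have hT' : T = Multiset.card l := by
      rw [hsum, hrep, Multiset.sum_replicate]; simp
    have hr2 : repunit b 2 = b + 1 := by
      rw [repunit_succ, repunit_one]; ring
    refine ⟨Multiset.replicate (T - (b + 1)) 1, ?_, ?_, ?_⟩
    · intro j hj
      have := Multiset.eq_of_mem_replicate hj
      omega
    · simp; omega
    · rw [Multiset.map_replicate, repunit_one, Multiset.sum_replicate]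
      simp; omega
  | succ q hq ih =>
    intro m T h hT
    obtain ⟨l, hmem, hcard, hsum⟩ := h
    have hRq1 : 1 ≤ repunit b q := repunit_pos b (by omega)
    have hRs : repunit b (q + 1) = b * repunit b q + 1 := repunit_succ b q
    -- card l ≥ b + 1
    have hTle : T ≤ Multiset.card l * repunit b q := by
      have : ∀ x ∈ l.map (repunit b), x ≤ repunit b q := by
        intro x hx
        obtain ⟨j, hj, rfl⟩ := Multiset.mem_map.mp hx
        exact repunit_mono b (by have := hmem j hj; omega)
      calc T = (l.map (repunit b)).sum := hsum
        _ ≤ Multiset.card (l.map (repunit b)) • repunit b q := Multiset.sum_le_card_nsmul _ _ this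
        _ = Multiset.card l * repunit b q := by simp [mul_comm]
    have hcb : b + 1 ≤ Multiset.card l := by
      by_contra hc
      push_neg at hc
      have : Multiset.card l * repunit b q ≤ b * repunit b q :=
        Nat.mul_le_mul_right _ (by omega)
      omega
    have hmb : b + 1 ≤ m := le_trans hcb hcard
    -- Step 1: RepLt b (q+1) (m - b) (T - b * repunit b q)
    have step1 : RepLt b (q + 1) (m - b) (T - b * repunit b q) := by
      set e := l.count q with he
      rcases Nat.lt_or_ge e b with heb | heb
      · -- few copies of q: strip them all and use the inductive hypothesis at level q
        have hle : Multiset.replicate e q ≤ l :=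
          Multiset.le_count_iff_replicate_le.mp (le_of_eq he)
        obtain ⟨l', hl'⟩ := le_iff_exists_add.mp hle
        have hcnt : l.count q = e + l'.count q := by
          rw [hl']
          simp [Multiset.count_replicate]
        have hcount' : l'.count q = 0 := by omega
        have hmem' : ∀ j ∈ l', 1 ≤ j ∧ j < q := by
          intro j hj
          have h1 := hmem j (by rw [hl']; exact Multiset.mem_add.mpr (Or.inr hj))
          have hjq : j ≠ q := by
            rintro rfl
            exact absurd (Multiset.count_eq_zero.mp hcount') (by simp [hj])
          omega
        have hsum' : T = e * repunit b q + (l'.map (repunit b)).sum := by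
          rw [hl'] at hsum
          simpa [Multiset.sum_replicate, smul_eq_mul] using hsum
        have hcard2 : Multiset.card l' ≤ m - e := by
          have := congrArg Multiset.card hl'
          simp at this
          omega
        have hrep' : RepLt b q (m - e) ((l'.map (repunit b)).sum) :=
          ⟨l', hmem', hcard2, rfl⟩
        -- subtract (b - e) copies of repunit b q, using ih, (b - e) times
        have multi : ∀ s m' T', RepLt b q m' T' → s * repunit b q ≤ T' →
            RepLt b q (m' - s) (T' - s * repunit b q) := by
          intro s
          induction s with
          | zero => intro m' T' h _; simpa using h
          | succ s ihs =>
            intro m' T' h hle'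
            have hsm : (s + 1) * repunit b q = s * repunit b q + repunit b q :=
              Nat.succ_mul s _
            have h1 : repunit b q ≤ T' := by omega
            have h2 := ih m' T' h h1
            have h3 : s * repunit b q ≤ T' - repunit b q := by omega
            have h4 := ihs _ _ h2 h3
            have e1 : m' - 1 - s = m' - (s + 1) := by omega
            have e2 : T' - repunit b q - s * repunit b q = T' - (s + 1) * repunit b q := by
              omega
            rwa [e1, e2] at h4
        have hsplit : e * repunit b q + (b - e) * repunit b q = b * repunit b q := by
          rw [← Nat.add_mul]
          congr 1
          omega
        have hle2 : (b - e) * repunit b q ≤ (l'.map (repunit b)).sum := by omega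
        have := multi (b - e) _ _ hrep' hle2
        have e1 : m - e - (b - e) = m - b := by omega
        have e2 : (l'.map (repunit b)).sum - (b - e) * repunit b q = T - b * repunit b q := by
          omega
        rw [e1, e2] at this
        exact this.mono (by omega) (le_refl _)
      · -- at least b copies of q: strip b of them directly
        have hle : Multiset.replicate b q ≤ l :=
          Multiset.le_count_iff_replicate_le.mp (by omega)
        obtain ⟨l', hl'⟩ := le_iff_exists_add.mp hle
        have hmem' : ∀ j ∈ l', 1 ≤ j ∧ j < q + 1 := fun j hj =>
          hmem j (by rw [hl']; exact Multiset.mem_add.mpr (Or.inr hj))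
        have hsum' : T = b * repunit b q + (l'.map (repunit b)).sum := by
          rw [hl'] at hsum
          simpa [Multiset.sum_replicate, smul_eq_mul] using hsum
        have hcard2 : Multiset.card l' ≤ m - b := by
          have := congrArg Multiset.card hl'
          simp at this
          omega
        exact ⟨l', hmem', hcard2, by omega⟩
    -- Step 2: subtract the final 1
    have h1T : 1 ≤ T - b * repunit b q := by omega
    have := step1.sub_one h1T
    have e1 : m - b - 1 + b = m - 1 := by omega
    have e2 : T - b * repunit b q - 1 = T - repunit b (q + 1) := by omega
    rwa [e1, e2] at this

lemma sum_rep (b n : ℕ) (v : Fin n → ℕ) (s : Finset (Fin n)) :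
    ∃ l : Multiset ℕ, (∀ j ∈ l, ∃ i ∈ s, j = i.val) ∧
      Multiset.card l = ∑ j ∈ s, v j ∧
      (l.map (repunit b)).sum = ∑ j ∈ s, v j * repunit b j.val := by
  classical
  induction s using Finset.induction_on with
  | empty => exact ⟨0, by simp, by simp, by simp⟩
  | @insert i s' hi ih =>
    obtain ⟨l, h1, h2, h3⟩ := ih
    refine ⟨Multiset.replicate (v i) i.val + l, ?_, ?_, ?_⟩
    · intro j hj
      rcases Multiset.mem_add.mp hj with hj | hj
      · exact ⟨i, Finset.mem_insert_self i s', Multiset.eq_of_mem_replicate hj⟩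
      · obtain ⟨i', hi', rfl⟩ := h1 j hj
        exact ⟨i', Finset.mem_insert_of_mem hi', rfl⟩
    · simp [h2, Finset.sum_insert hi]
    · simp [Multiset.map_add, Multiset.map_replicate, Multiset.sum_add,
        Multiset.sum_replicate, h3, Finset.sum_insert hi, smul_eq_mul]

lemma aux (b a n : ℕ) (hb : 1 < b) (hn : 1 < n) (ha : 0 < a)
    (hgcd : Nat.gcd (repunit b n) a = 1) (ω : ℕ) (u v : Fin n → ℕ)
    (hu : ω = ∑ j : Fin n, u j * aseq b a n (j.val + 1))
    (hv : ω = ∑ j : Fin n, v j * aseq b a n (j.val + 1))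
    (hlt : ∑ j : Fin n, v j < ∑ j : Fin n, u j) :
    ∃ t ∈ grep b a n, ω = t + repunit b n := by
  set N := repunit b n with hN
  have hsum : ∀ w : Fin n → ℕ, ∑ j : Fin n, w j * aseq b a n (j.val + 1) =
      (∑ j : Fin n, w j) * N + a * ∑ j : Fin n, w j * repunit b j.val := by
    intro w
    have h1 : ∀ j : Fin n, w j * aseq b a n (j.val + 1) =
        w j * N + a * (w j * repunit b j.val) := by
      intro j
      simp only [aseq, Nat.add_sub_cancel, ← hN]
      ring
    rw [Finset.sum_congr rfl fun j _ => h1 j, Finset.sum_add_distrib, ← Finset.sum_mul,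
      ← Finset.mul_sum]
  set U := ∑ j : Fin n, u j with hUdef
  set V := ∑ j : Fin n, v j with hVdef
  set Tu := ∑ j : Fin n, u j * repunit b j.val with hTudef
  set Tv := ∑ j : Fin n, v j * repunit b j.val with hTvdef
  have hU : ω = U * N + a * Tu := by rw [hu, hsum]
  have hV : ω = V * N + a * Tv := by rw [hv, hsum]
  obtain ⟨d, hd⟩ : ∃ d, U = V + d := ⟨U - V, by omega⟩
  have hd1 : 1 ≤ d := by omega
  have hUN : U * N = V * N + d * N := by rw [hd, Nat.add_mul]
  have heq : d * N + a * Tu = a * Tv := by omega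
  have hTuv : Tu ≤ Tv := Nat.le_of_mul_le_mul_left (by omega) ha
  obtain ⟨e, he⟩ : ∃ e, Tv = Tu + e := ⟨Tv - Tu, by omega⟩
  have hae : a * Tv = a * Tu + a * e := by rw [he, Nat.mul_add]
  have hde : d * N = a * e := by omega
  have hco : Nat.Coprime a N := Nat.coprime_comm.mp hgcd
  have hadvd : a ∣ d := hco.dvd_of_dvd_mul_right ⟨e, hde⟩
  have had : a ≤ d := Nat.le_of_dvd (by omega) hadvd
  have hNe : N ≤ e := by
    have h1 : a * N ≤ d * N := Nat.mul_le_mul_right N had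
    have h2 : a * N ≤ a * e := by omega
    exact Nat.le_of_mul_le_mul_left h2 ha
  have hTvN : N ≤ Tv := by omega
  have hN1 : 1 ≤ N := repunit_pos b (by omega)
  have hV1 : 1 ≤ V := by
    by_contra hV0
    push_neg at hV0
    have hz : ∀ j ∈ (Finset.univ : Finset (Fin n)), v j = 0 := by
      rw [← Finset.sum_eq_zero_iff]
      omega
    have : Tv = 0 := by
      rw [hTvdef]
      exact Finset.sum_eq_zero fun j hj => by rw [hz j hj, Nat.zero_mul]
    omega
  -- Tv is a sum of at most V repunits with indices in [1, n)
  have hrep : RepLt b n V Tv := by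
    obtain ⟨l, hlmem, hlcard, hlsum⟩ := sum_rep b n v (Finset.univ.filter fun j : Fin n => j.val ≠ 0)
    refine ⟨l, ?_, ?_, ?_⟩
    · intro j hj
      obtain ⟨i, hi, rfl⟩ := hlmem j hj
      simp only [Finset.mem_filter] at hi
      exact ⟨by omega, i.isLt⟩
    · rw [hlcard]
      exact Finset.sum_le_sum_of_subset (Finset.filter_subset _ _)
    · rw [hlsum, hTvdef]
      symm
      apply Finset.sum_subset (Finset.filter_subset _ _)
      intro x _ hx
      simp only [Finset.mem_filter, Finset.mem_univ, true_and, not_not] at hx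
      have : repunit b x.val = 0 := by rw [hx]; simp [repunit]
      rw [this, Nat.mul_zero]
  -- apply the key lemma
  obtain ⟨l', hmem', hcard', hsum'⟩ := key b hb n (by omega) V Tv hrep hTvN
  set c := Multiset.card l' with hc
  -- build the witness t
  refine ⟨(V - 1 + a - c) * N + (l'.map fun j => aseq b a n (j + 1)).sum, ?_, ?_⟩
  · apply AddSubmonoid.add_mem
    · have hNmem : N ∈ grep b a n := by
        apply AddSubmonoid.subset_closure
        exact ⟨1, le_refl 1, by rw [hN]; simp [aseq, repunit]⟩
      have := AddSubmonoid.nsmul_mem (grep b a n) hNmem (V - 1 + a - c)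
      rwa [smul_eq_mul] at this
    · apply AddSubmonoid.multiset_sum_mem
      intro x hx
      obtain ⟨j, _, rfl⟩ := Multiset.mem_map.mp hx
      exact AddSubmonoid.subset_closure ⟨j + 1, by omega, rfl⟩
  · -- the arithmetic
    have hmsum : (l'.map fun j => aseq b a n (j + 1)).sum = c * N + a * (Tv - N) := by
      have h1 : (l'.map fun j => aseq b a n (j + 1)) =
          l'.map fun j => N + a * repunit b j := by
        apply Multiset.map_congr rfl
        intro j _
        simp [aseq, hN]
      rw [h1]
      rw [show (fun j => N + a * repunit b j) = (fun j => N + (fun i => a * repunit b i) j)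
        from rfl]
      rw [Multiset.sum_map_add]
      rw [Multiset.sum_map_mul_left, ← hsum']
      congr 1
      simp [Multiset.map_const', mul_comm, hc]
    rw [hmsum]
    obtain ⟨X, hX⟩ : ∃ X, Tv = X + N := ⟨Tv - N, by omega⟩
    have hXX : Tv - N = X := by omega
    rw [hXX]
    rw [hX] at hV
    have hmul : a * (X + N) = a * X + a * N := Nat.mul_add a X N
    have hcV : c ≤ V - 1 := hcard'
    have h2 : (V - 1 + a - c) * N + c * N + N = V * N + a * N := by
      have h3 : (V - 1 + a - c) + c + 1 = V + a := by omega
      calc (V - 1 + a - c) * N + c * N + N = ((V - 1 + a - c) + c + 1) * N := by ring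
        _ = (V + a) * N := by rw [h3]
        _ = V * N + a * N := Nat.add_mul V a N
    omega

/-- `S_a(b,n)` is homogeneous: every element of the Apéry set with respect to the
multiplicity `a_1 = r_b(n)` has a unique length.  Here a representation of `ω` is a
tuple `u : Fin n → ℕ` (the coordinate `j : Fin n` is the coefficient of `a_{j+1}`)
with `ω = ∑ j, u j · a_{j+1}`. -/
theorem stmt_7 (b a n : ℕ) (hb : 1 < b) (hn : 1 < n) (ha : 0 < a)
    (hgcd : Nat.gcd (repunit b n) a = 1) :
    ∀ ω ∈ Apery (grep b a n) (repunit b n),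
      ∀ u v : Fin n → ℕ,
        ω = ∑ j : Fin n, u j * aseq b a n (j.val + 1) →
        ω = ∑ j : Fin n, v j * aseq b a n (j.val + 1) →
        ∑ j : Fin n, u j = ∑ j : Fin n, v j := by
  intro ω hω u v hu hv
  by_contra hne
  rcases Ne.lt_or_gt hne with hlt | hlt
  · exact hω.2 (aux b a n hb hn ha hgcd ω v u hv hu hlt)
  · exact hω.2 (aux b a n hb hn ha hgcd ω u v hu hv hlt)
end

section
/- Let b > 1 be an integer. For every integer i ≥ 2, the sum over all tuples (u_2, …, u_i) ∈ R(b,i) of the coordinate sums ∑_{j=2}^i u_j equals ∑_{j=2}^i (b^i + b^{i−(j−1)})/2. -/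
/-- The set `R(b,i)` of tuples `(u_2, …, u_i) ∈ ℕ^{i-1}` (a tuple with `m = i-1` entries,
where coordinate `j : Fin m` represents `u_{j+2}`) such that every entry is `≤ b`, and
whenever an entry equals `b`, all previous entries are `0`. -/
def RFin (b m : ℕ) : Finset (Fin m → ℕ) :=
  (Fintype.piFinset fun _ => Finset.range (b + 1)).filter
    (fun u => ∀ j, u j = b → ∀ k, k < j → u k = 0)

lemma RFin_zero (b : ℕ) : RFin b 0 = {fun j => j.elim0} := by
  ext u
  simp only [RFin, Finset.mem_filter, Finset.mem_singleton, Fintype.mem_piFinset]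
  constructor
  · intro _; exact Subsingleton.elim _ _
  · intro _; exact ⟨fun j => j.elim0, fun j => j.elim0⟩

lemma RFin_succ (b m : ℕ) (hb : 0 < b) :
    RFin b (m + 1) = insert (Fin.snoc (fun _ => 0) b)
      (((RFin b m) ×ˢ Finset.range b).image (fun p => Fin.snoc p.1 p.2)) := by
  ext u
  simp only [RFin, Finset.mem_insert, Finset.mem_image, Finset.mem_filter,
    Fintype.mem_piFinset, Finset.mem_range, Finset.mem_product]
  constructor
  · rintro ⟨h1, h2⟩
    by_cases hl : u (Fin.last m) = b
    · left
      funext j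
      induction j using Fin.lastCases with
      | last => simp [hl]
      | cast j =>
        simp only [Fin.snoc_castSucc]
        exact h2 _ hl _ (Fin.castSucc_lt_last j)
    · right
      refine ⟨(Fin.init u, u (Fin.last m)), ⟨⟨⟨fun j => h1 _, ?_⟩, ?_⟩, ?_⟩⟩
      · intro j hj k hk
        exact h2 _ hj _ (by simpa using hk)
      · have := h1 (Fin.last m); omega
      · exact Fin.snoc_init_self u
  · rintro (rfl | ⟨⟨v, c⟩, ⟨⟨hv1, hv2⟩, hc⟩, rfl⟩)
    · constructor
      · intro j
        induction j using Fin.lastCases with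
        | last => simp
        | cast j => simp
      · intro j hj k hk
        induction j using Fin.lastCases with
        | last =>
          induction k using Fin.lastCases with
          | last => rw [Fin.lt_def] at hk; omega
          | cast k => simp
        | cast j =>
          simp only [Fin.snoc_castSucc] at hj
          omega
    · constructor
      · intro j
        induction j using Fin.lastCases with
        | last => simp only [Fin.snoc_last]; omega
        | cast j => simpa using hv1 j
      · intro j hj k hk
        induction j using Fin.lastCases with
        | last => simp only [Fin.snoc_last] at hj; omega
        | cast j =>
          simp only [Fin.snoc_castSucc] at hj
          induction k using Fin.lastCases with
          | last =>
            exfalso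
            rw [Fin.lt_def] at hk
            have := j.isLt
            simp only [Fin.val_last, Fin.coe_castSucc] at hk
            omega
          | cast k =>
            simp only [Fin.snoc_castSucc]
            exact hv2 j hj k (Fin.castSucc_lt_castSucc_iff.mp hk)

lemma snoc_notmem (b m : ℕ) (hb : 0 < b) :
    (Fin.snoc (fun _ => 0) b : Fin (m+1) → ℕ) ∉
      (((RFin b m) ×ˢ Finset.range b).image (fun p => Fin.snoc p.1 p.2)) := by
  simp only [Finset.mem_image, Finset.mem_product, Finset.mem_range, not_exists]
  rintro ⟨v, c⟩ ⟨⟨hv, hc⟩, he⟩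
  have := congrFun he (Fin.last m)
  simp only [Fin.snoc_last] at this
  omega

lemma card_rec (b m : ℕ) (hb : 0 < b) :
    (RFin b (m+1)).card = b * (RFin b m).card + 1 := by
  rw [RFin_succ b m hb, Finset.card_insert_of_notMem (snoc_notmem b m hb),
    Finset.card_image_of_injOn, Finset.card_product, Finset.card_range]
  · ring
  · rintro ⟨v, c⟩ _ ⟨w, d⟩ _ he
    have h1 : v = w := by
      funext j
      have := congrFun he (Fin.castSucc j)
      simpa using this
    have h2 : c = d := by
      have := congrFun he (Fin.last m)
      simpa using this
    simp [h1, h2]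

lemma sum_rec (b m : ℕ) (hb : 0 < b) :
    (∑ u ∈ RFin b (m+1), ∑ j, u j)
      = b * (∑ u ∈ RFin b m, ∑ j, u j)
        + (RFin b m).card * (∑ c ∈ Finset.range b, c) + b := by
  rw [RFin_succ b m hb, Finset.sum_insert (snoc_notmem b m hb),
    Finset.sum_image]
  · have h1 : ∑ j, (Fin.snoc (fun _ => 0) b : Fin (m+1) → ℕ) j = b := by
      rw [Fin.sum_univ_castSucc]
      simp
    have h2 : ∀ p : (Fin m → ℕ) × ℕ, ∑ j, (Fin.snoc p.1 p.2 : Fin (m+1) → ℕ) j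
        = (∑ j, p.1 j) + p.2 := by
      intro p
      rw [Fin.sum_univ_castSucc]
      simp
    rw [h1]
    have h3 : ∑ p ∈ (RFin b m) ×ˢ Finset.range b,
        (∑ j, (Fin.snoc p.1 p.2 : Fin (m+1) → ℕ) j)
        = b * (∑ u ∈ RFin b m, ∑ j, u j)
          + (RFin b m).card * (∑ c ∈ Finset.range b, c) := by
      rw [Finset.sum_congr rfl (fun p _ => h2 p), Finset.sum_product]
      have h4 : ∀ v : Fin m → ℕ, ∑ c ∈ Finset.range b, ((∑ j, v j) + c)
          = b * (∑ j, v j) + (∑ c ∈ Finset.range b, c) := by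
        intro v
        rw [Finset.sum_add_distrib, Finset.sum_const, Finset.card_range, smul_eq_mul]
      rw [Finset.sum_congr rfl (fun v _ => h4 v), Finset.sum_add_distrib,
        Finset.sum_const, smul_eq_mul, ← Finset.mul_sum]
      try ring
    rw [h3]
    try ring
    try omega
  · rintro ⟨v, c⟩ _ ⟨w, d⟩ _ he
    have h1 : v = w := by
      funext j
      have := congrFun he (Fin.castSucc j)
      simpa using this
    have h2 : c = d := by
      have := congrFun he (Fin.last m)
      simpa using this
    simp [h1, h2]

lemma card_closed (b : ℕ) (hb : 1 < b) (m : ℕ) :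
    (RFin b m).card * (b - 1) + 1 = b ^ (m + 1) := by
  obtain ⟨c, rfl⟩ : ∃ c, b = c + 2 := ⟨b - 2, by omega⟩
  induction m with
  | zero => simp [RFin_zero]
  | succ m ih =>
    rw [card_rec _ _ (by omega)]
    have h : (c + 2) - 1 = c + 1 := by omega
    rw [h] at ih ⊢
    calc ((c + 2) * (RFin (c+2) m).card + 1) * (c + 1) + 1
        = (c + 2) * ((RFin (c+2) m).card * (c + 1) + 1) := by ring
      _ = (c + 2) * (c + 2) ^ (m + 1) := by rw [ih]
      _ = (c + 2) ^ (m + 1 + 1) := by ring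

lemma sum_closed (b : ℕ) (hb : 1 < b) (m : ℕ) :
    2 * (∑ u ∈ RFin b m, ∑ j, u j) * (b - 1) + m * b ^ (m + 1) + b
      = m * b ^ (m + 2) + b ^ (m + 1) := by
  obtain ⟨c, rfl⟩ : ∃ c, b = c + 2 := ⟨b - 2, by omega⟩
  have h : (c + 2) - 1 = c + 1 := by omega
  induction m with
  | zero => simp [RFin_zero]
  | succ m ih =>
    have hg : (∑ x ∈ Finset.range (c + 2), x) * 2 = (c + 2) * (c + 1) := by
      rw [Finset.sum_range_id_mul_two, h]
    have hN := card_closed (c + 2) hb m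
    rw [h] at ih hN ⊢
    have hrec := sum_rec (c+2) m (Nat.succ_pos _)
    rw [hrec]
    set S := ∑ u ∈ RFin (c+2) m, ∑ j, u j
    set N := (RFin (c+2) m).card
    set g := ∑ x ∈ Finset.range (c + 2), x
    set P := (c + 2) ^ (m + 1) with hP
    have e1 : (c + 2) ^ (m + 2) = (c + 2) * P := by rw [hP]; ring
    have e2 : (c + 2) ^ (m + 1 + 1) = (c + 2) * P := by rw [hP]; ring
    have e3 : (c + 2) ^ (m + 1 + 2) = (c + 2) * (c + 2) * P := by rw [hP]; ring
    rw [e2, e3]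
    rw [e1] at ih
    zify at ih hN hg ⊢
    linear_combination (c + 2 : ℤ) * ih + ((c+2) * (c+1) : ℤ) * hN + ((N : ℤ) * (c+1)) * hg

lemma geo_closed (c m : ℕ) :
    (∑ t ∈ Finset.Icc 1 m, (c + 2) ^ t) * (c + 1) + (c + 2) = (c + 2) ^ (m + 1) := by
  induction m with
  | zero => simp
  | succ m ih =>
    rw [Finset.sum_Icc_succ_top (Nat.le_add_left 1 m)]
    have e : (c + 2) ^ (m + 1 + 1) = (c + 2) * (c + 2) ^ (m + 1) := by ring
    rw [e]
    zify at ih ⊢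
    linear_combination ih

lemma reindex (b i : ℕ) (hi : 2 ≤ i) :
    ∑ j ∈ Finset.Icc 2 i, b ^ (i - (j - 1)) = ∑ t ∈ Finset.Icc 1 (i - 1), b ^ t := by
  refine Finset.sum_bij' (fun j _ => i - (j - 1)) (fun t _ => i - t + 1) ?_ ?_ ?_ ?_ ?_
  · intro a ha
    simp only [Finset.mem_Icc] at ha ⊢
    omega
  · intro a ha
    simp only [Finset.mem_Icc] at ha ⊢
    omega
  · intro a ha
    simp only [Finset.mem_Icc] at ha
    show i - (i - (a - 1)) + 1 = a
    omega
  · intro a ha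
    simp only [Finset.mem_Icc] at ha
    show i - (i - a + 1 - 1) = a
    omega
  · intro a ha
    rfl

/-- Each quantity `b^i + b^(i-(j-1))` is even, so the natural-number divisions by `2`
below are exact. -/
theorem stmt_12 (b : ℕ) (hb : 1 < b) :
    ∀ i, 2 ≤ i →
      ∑ u ∈ RFin b (i - 1), (∑ j, u j)
        = ∑ j ∈ Finset.Icc 2 i, (b ^ i + b ^ (i - (j - 1))) / 2 := by
  intro i hi
  obtain ⟨c, rfl⟩ : ∃ c, b = c + 2 := ⟨b - 2, by omega⟩
  obtain ⟨m, rfl⟩ : ∃ m, i = m + 1 := ⟨i - 1, by omega⟩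
  have hm1 : 1 ≤ m := by omega
  have hd : c + 2 - 1 = c + 1 := by omega
  show ∑ u ∈ RFin (c+2) m, (∑ j, u j)
      = ∑ j ∈ Finset.Icc 2 (m+1), ((c+2) ^ (m+1) + (c+2) ^ (m+1 - (j - 1))) / 2
  -- 2 * RHS equals the sum without division
  have hR2 : 2 * (∑ j ∈ Finset.Icc 2 (m + 1), ((c+2) ^ (m+1) + (c+2) ^ (m+1 - (j - 1))) / 2)
      = ∑ j ∈ Finset.Icc 2 (m + 1), ((c+2) ^ (m+1) + (c+2) ^ (m+1 - (j - 1))) := by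
    rw [Finset.mul_sum]
    refine Finset.sum_congr rfl ?_
    intro j hj
    simp only [Finset.mem_Icc] at hj
    have heven : Even ((c+2) ^ (m+1) + (c+2) ^ (m+1 - (j - 1))) := by
      rw [Nat.even_add, Nat.even_pow, Nat.even_pow]
      have h1 : m + 1 ≠ 0 := by omega
      have h2 : m + 1 - (j - 1) ≠ 0 := by omega
      tauto
    exact Nat.mul_div_cancel' heven.two_dvd
  have hcard : (Finset.Icc 2 (m + 1)).card = m := by
    rw [Nat.card_Icc]
    omega
  have hsplit : ∑ j ∈ Finset.Icc 2 (m + 1), ((c+2) ^ (m+1) + (c+2) ^ (m+1 - (j - 1)))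
      = m * (c+2) ^ (m + 1) + ∑ t ∈ Finset.Icc 1 m, (c+2) ^ t := by
    rw [Finset.sum_add_distrib, Finset.sum_const, hcard, smul_eq_mul,
      reindex (c+2) (m+1) (by omega), Nat.add_sub_cancel]
  have hgeo := geo_closed c m
  have hkey : 2 * (∑ j ∈ Finset.Icc 2 (m + 1), ((c+2) ^ (m+1) + (c+2) ^ (m+1 - (j - 1))) / 2) * (c + 1)
        + m * (c+2) ^ (m + 1) + (c+2)
      = m * (c+2) ^ (m + 2) + (c+2) ^ (m + 1) := by
    rw [hR2, hsplit]
    generalize (∑ t ∈ Finset.Icc 1 m, (c+2) ^ t) = T at hgeo ⊢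
    have e1 : (c+2) ^ (m + 2) = (c+2) * (c+2) ^ (m + 1) := by ring
    rw [e1]
    zify at hgeo ⊢
    linear_combination hgeo
  have hSc := sum_closed (c+2) (by omega) m
  rw [hd] at hSc
  generalize (∑ u ∈ RFin (c+2) m, ∑ j, u j) = S at hSc ⊢
  generalize (∑ j ∈ Finset.Icc 2 (m + 1), ((c+2) ^ (m+1) + (c+2) ^ (m+1 - (j - 1))) / 2) = R
    at hkey ⊢
  have e : 2 * S * (c + 1) + m * (c+2) ^ (m + 1) + (c+2)
      = 2 * R * (c + 1) + m * (c+2) ^ (m + 1) + (c+2) := hSc.trans hkey.symm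
  have e2 : 2 * S * (c + 1) = 2 * R * (c + 1) :=
    Nat.add_right_cancel (Nat.add_right_cancel e)
  have e3 : 2 * S = 2 * R := mul_right_cancel₀ (by omega : c + 1 ≠ 0) e2
  omega
end
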